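/- Suppose Assumption A holds. Fix γ ∈ (0, 1) and a* ≤ 0 such that −γ ≤ (v(y)² − w(y)²)/(P(X > −y) w(y)) for all y ≤ a*. Then for every starting point y ≤ 0, the second moment of the importance-sampling estimator satisfies E_y^{Q_{a*}}[R²] ≤ (1 − γ)⁻¹ κ(a*)⁻² v(y + a*)², where κ(a*) = inf_{z ≥ 0} v(z + a*) = P(Z > −a*). -/

import Mathlib

open MeasureTheory ProbabilityTheory Filter Set
open scoped ENNReal NNReal

noncomputable section

/-- The (right) tail function `t ↦ P(X > t)` of a random variable, as a real number. -/
def tail {Ω : Type*} [MeasurableSpace Ω] (μ : Measure Ω) (X : Ω → ℝ) (t : ℝ) : ℝ :=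
  (μ {ω | t < X ω}).toReal

/-- Prepend a point to a path. -/
def prepend (y : ℝ) (ω : ℕ → ℝ) : ℕ → ℝ := fun n =>
  match n with
  | 0 => y
  | k + 1 => ω k

/-- `τ(0)`: the first time the path exceeds level `0` (`⊤` if it never does). -/
def tauZero (ω : ℕ → ℝ) : ℕ∞ :=
  sInf ((fun n : ℕ => (n : ℕ∞)) '' {n : ℕ | 0 < ω n})

/-- The one-step importance-sampling transition law
`Q_{a}(y, dz) = P(y + X ∈ dz) · v(z + a)/w(y + a)`, where `v(u) = P(Z > −u)` and
`w(u) = P(X + Z > −u)`. -/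
def QKer {Ω : Type*} [MeasurableSpace Ω] (μ : Measure Ω) (X Z : Ω → ℝ)
    (a y : ℝ) : Measure ℝ :=
  (μ.map fun ω => y + X ω).withDensity fun z =>
    μ {ω | -(z + a) < Z ω} / μ {ω | -(y + a) < X ω + Z ω}

/-- The importance-sampling estimator
`R = 1(τ(0) < ∞) ∏_{k=1}^{τ(0)} w(S_{k−1} + a)/v(S_k + a)`. -/
def estR {Ω : Type*} [MeasurableSpace Ω] (μ : Measure Ω) (X Z : Ω → ℝ)
    (a : ℝ) (ω : ℕ → ℝ) : ℝ≥0∞ :=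
  if tauZero ω = ⊤ then 0
  else ∏ j ∈ Finset.range (tauZero ω).toNat,
    μ {ω' | -(ω j + a) < X ω' + Z ω'} / μ {ω' | -(ω (j + 1) + a) < Z ω'}

lemma tauZero_le_iff (ω : ℕ → ℝ) (n : ℕ) :
    tauZero ω ≤ (n : ℕ∞) ↔ ∃ k ≤ n, 0 < ω k := by
  constructor
  · intro h
    by_contra hc
    push_neg at hc
    have : ((n+1 : ℕ) : ℕ∞) ≤ tauZero ω := by
      apply le_sInf
      rintro m ⟨k, hk, rfl⟩
      have : n + 1 ≤ k := by
        by_contra hk2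
        exact absurd (hc k (by omega)) (not_le.mpr hk)
      simpa using Nat.cast_le.mpr this
    have h2 : ((n+1:ℕ) : ℕ∞) ≤ (n : ℕ∞) := this.trans h
    exact absurd (Nat.cast_le.mp h2) (by omega)
  · rintro ⟨k, hk, hω⟩
    exact le_trans (sInf_le ⟨k, hω, rfl⟩) (by simpa using hk)

lemma tauZero_eq_top_iff (ω : ℕ → ℝ) : tauZero ω = ⊤ ↔ ∀ n, ¬ 0 < ω n := by
  rw [tauZero, sInf_eq_top]
  constructor
  · intro h n hn
    exact absurd (h _ ⟨n, hn, rfl⟩) (by simp)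
  · rintro h m ⟨k, hk, rfl⟩
    exact absurd hk (h k)

lemma tauZero_eq_coe_iff (ω : ℕ → ℝ) (n : ℕ) :
    tauZero ω = (n : ℕ∞) ↔ (0 < ω n ∧ ∀ k < n, ¬ 0 < ω k) := by
  constructor
  · intro h
    have hn : ∃ k ≤ n, 0 < ω k := (tauZero_le_iff ω n).mp h.le
    have hmin : ∀ k < n, ¬ 0 < ω k := by
      intro k hk hc
      have : tauZero ω ≤ (k : ℕ∞) := (tauZero_le_iff ω k).mpr ⟨k, le_rfl, hc⟩
      rw [h] at this
      exact absurd (Nat.cast_le.mp this) (by omega)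
    refine ⟨?_, hmin⟩
    obtain ⟨k, hk, hc⟩ := hn
    rcases eq_or_lt_of_le hk with rfl | hlt
    · exact hc
    · exact absurd hc (hmin k hlt)
  · rintro ⟨h1, h2⟩
    refine le_antisymm ((tauZero_le_iff ω n).mpr ⟨n, le_rfl, h1⟩) ?_
    apply le_sInf
    rintro m ⟨k, hk, rfl⟩
    have : n ≤ k := by
      by_contra hc
      exact h2 k (by omega) hk
    simpa using this

lemma tauZero_const_pos {z : ℝ} (hz : 0 < z) : tauZero (fun _ => z) = 0 := by
  rw [show ((0:ℕ∞)) = ((0:ℕ) : ℕ∞) by rfl, tauZero_eq_coe_iff]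
  exact ⟨hz, by omega⟩

lemma tauZero_prepend {y : ℝ} (hy : y ≤ 0) (ω : ℕ → ℝ) :
    tauZero (prepend y ω) = tauZero ω + 1 := by
  rcases eq_or_ne (tauZero ω) ⊤ with h | h
  · rw [h]
    rw [tauZero_eq_top_iff] at h
    rw [show (⊤ + 1 : ℕ∞) = ⊤ by rfl, tauZero_eq_top_iff]
    intro n
    match n with
    | 0 => simpa [prepend] using hy
    | k + 1 => exact h k
  · obtain ⟨t, ht⟩ : ∃ t : ℕ, tauZero ω = (t : ℕ∞) := by
      cases hτ : tauZero ω with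
      | top => exact absurd hτ h
      | coe t => exact ⟨t, rfl⟩
    rw [ht]
    rw [tauZero_eq_coe_iff] at ht
    rw [show ((t:ℕ∞) + 1) = ((t+1 : ℕ) : ℕ∞) by exact_mod_cast rfl, tauZero_eq_coe_iff]
    constructor
    · exact ht.1
    · intro k hk
      match k with
      | 0 => simpa [prepend] using hy
      | j + 1 => exact ht.2 j (by omega)

section Aux
variable {Ω : Type*} [MeasurableSpace Ω] (μ : Measure Ω) (X Z : Ω → ℝ) (a : ℝ)

lemma meas_tail_antitone (f : Ω → ℝ) : Antitone (fun t : ℝ => μ {ω | t < f ω}) := by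
  intro s t hst
  exact measure_mono (fun ω hω => lt_of_le_of_lt hst hω)

lemma meas_tail_measurable (f : Ω → ℝ) : Measurable (fun t : ℝ => μ {ω | t < f ω}) :=
  (meas_tail_antitone μ f).measurable

lemma measurableSet_tauZero_le (n : ℕ) :
    MeasurableSet {ω : ℕ → ℝ | tauZero ω ≤ (n : ℕ∞)} := by
  have : {ω : ℕ → ℝ | tauZero ω ≤ (n : ℕ∞)} = ⋃ k, ⋃ (_ : k ≤ n), {ω : ℕ → ℝ | 0 < ω k} := by
    ext ω
    simp only [mem_setOf_eq, mem_iUnion, tauZero_le_iff]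
    tauto
  rw [this]
  exact MeasurableSet.iUnion fun k => MeasurableSet.iUnion fun _ =>
    measurableSet_lt measurable_const (measurable_pi_apply k)

lemma measurableSet_tauZero_eq (n : ℕ) :
    MeasurableSet {ω : ℕ → ℝ | tauZero ω = (n : ℕ∞)} := by
  have : {ω : ℕ → ℝ | tauZero ω = (n : ℕ∞)} =
      {ω : ℕ → ℝ | 0 < ω n} ∩ ⋂ k, ⋂ (_ : k < n), {ω : ℕ → ℝ | ¬ 0 < ω k} := by
    ext ω
    simp only [mem_setOf_eq, mem_inter_iff, mem_iInter, tauZero_eq_coe_iff]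
  rw [this]
  exact ((measurableSet_lt measurable_const (measurable_pi_apply n))).inter
    (MeasurableSet.iInter fun k => MeasurableSet.iInter fun _ =>
      (measurableSet_lt measurable_const (measurable_pi_apply k)).compl)

lemma measurable_prodR (n : ℕ) : Measurable (fun ω : ℕ → ℝ =>
    ∏ j ∈ Finset.range n,
      μ {ω' | -(ω j + a) < X ω' + Z ω'} / μ {ω' | -(ω (j + 1) + a) < Z ω'}) := by
  apply Finset.measurable_prod
  intro j _
  apply Measurable.div
  · exact (meas_tail_measurable μ (fun ω' => X ω' + Z ω')).comp
      (by fun_prop)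
  · exact (meas_tail_measurable μ Z).comp (by fun_prop)

lemma estR_eq_tsum (ω : ℕ → ℝ) : estR μ X Z a ω =
    ∑' n : ℕ, Set.indicator {ω' : ℕ → ℝ | tauZero ω' = (n : ℕ∞)}
      (fun ω'' => ∏ j ∈ Finset.range n,
        μ {ω' | -(ω'' j + a) < X ω' + Z ω'} / μ {ω' | -(ω'' (j + 1) + a) < Z ω'}) ω := by
  cases hτ : tauZero ω with
  | top =>
    rw [estR, if_pos hτ]
    symm
    convert tsum_zero with n
    apply Set.indicator_of_notMem
    simp only [mem_setOf_eq, hτ]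
    intro h
    exact absurd h (by simp)
  | coe t =>
    rw [estR, if_neg (by simp [hτ])]
    rw [tsum_eq_single t]
    · rw [Set.indicator_of_mem (by exact hτ)]
      simp [hτ]
    · intro n hn
      apply Set.indicator_of_notMem
      simp only [mem_setOf_eq, hτ]
      exact fun h => hn (by exact_mod_cast h.symm)

lemma measurable_estR : Measurable (estR μ X Z a) := by
  have : estR μ X Z a = fun ω => ∑' n : ℕ, Set.indicator {ω' : ℕ → ℝ | tauZero ω' = (n : ℕ∞)}
      (fun ω'' => ∏ j ∈ Finset.range n,
        μ {ω' | -(ω'' j + a) < X ω' + Z ω'} / μ {ω' | -(ω'' (j + 1) + a) < Z ω'}) ω := by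
    funext ω; exact estR_eq_tsum μ X Z a ω
  rw [this]
  exact Measurable.ennreal_tsum fun n =>
    (measurable_prodR μ X Z a n).indicator (measurableSet_tauZero_eq n)


lemma estR_const_pos {z : ℝ} (hz : 0 < z) : estR μ X Z a (fun _ => z) = 1 := by
  rw [estR, if_neg (by rw [tauZero_const_pos hz]; simp)]
  rw [tauZero_const_pos hz]
  simp

lemma estR_prepend {y : ℝ} (hy : y ≤ 0) (ω : ℕ → ℝ) :
    estR μ X Z a (prepend y ω) =
      (μ {ω' | -(y + a) < X ω' + Z ω'} / μ {ω' | -(ω 0 + a) < Z ω'}) * estR μ X Z a ω := by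
  cases hτ : tauZero ω with
  | top =>
    rw [estR, if_pos (by rw [tauZero_prepend hy, hτ]; rfl)]
    rw [estR, if_pos hτ, mul_zero]
  | coe t =>
    have hpr : tauZero (prepend y ω) = ((t+1 : ℕ) : ℕ∞) := by
      rw [tauZero_prepend hy, hτ]; exact_mod_cast rfl
    rw [estR, if_neg (by rw [hpr]; exact ENat.coe_ne_top _),
      estR, if_neg (by rw [hτ]; exact ENat.coe_ne_top _), hpr, hτ]
    simp only [ENat.toNat_coe]
    rw [Finset.prod_range_succ']
    rw [mul_comm]
    rfl
end Aux

section Pos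
variable {Ω : Type*} [MeasurableSpace Ω] (μ : Measure Ω) [IsProbabilityMeasure μ]
  (X : Ω → ℝ)
set_option linter.unusedSectionVars false

lemma tail_antitone : Antitone (tail μ X) := by
  intro s t hst
  exact ENNReal.toReal_le_toReal (measure_ne_top μ _) (measure_ne_top μ _) |>.mpr
    (measure_mono fun ω hω => lt_of_le_of_lt hst hω)

lemma tail_nonneg (t : ℝ) : 0 ≤ tail μ X t := ENNReal.toReal_nonneg

lemma tail_le_one (t : ℝ) : tail μ X t ≤ 1 := by
  rw [tail, show (1:ℝ) = (1:ℝ≥0∞).toReal by simp]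
  exact ENNReal.toReal_le_toReal (measure_ne_top μ _) (by simp) |>.mpr
    (le_trans (measure_mono (subset_univ _)) (by simp))

lemma layercake_fin (hX : Measurable X) (hint : Integrable X μ) :
    ∫⁻ s in Set.Ioi (0:ℝ), μ {ω | s < X ω} < ∞ := by
  have hmax : Integrable (fun ω => max (X ω) 0) μ := hint.pos_part
  have h1 : ∫⁻ ω, ENNReal.ofReal (max (X ω) 0) ∂μ < ∞ := by
    have := hmax.hasFiniteIntegral
    rwa [hasFiniteIntegral_iff_ofReal (f := fun ω => max (X ω) 0)
      (Filter.Eventually.of_forall fun ω => le_max_right _ _)] at this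
  have h2 : ∫⁻ ω, ENNReal.ofReal (max (X ω) 0) ∂μ
      = ∫⁻ s in Set.Ioi (0:ℝ), μ {ω | s < max (X ω) 0} :=
    lintegral_eq_lintegral_meas_lt μ (Filter.Eventually.of_forall fun ω => le_max_right _ _)
      (hX.max measurable_const).aemeasurable
  have h3 : ∫⁻ s in Set.Ioi (0:ℝ), μ {ω | s < max (X ω) 0}
      = ∫⁻ s in Set.Ioi (0:ℝ), μ {ω | s < X ω} := by
    apply setLIntegral_congr_fun measurableSet_Ioi
    intro s hs
    show μ {ω | s < max (X ω) 0} = μ {ω | s < X ω}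
    congr 1
    ext ω
    simp only [mem_setOf_eq, lt_max_iff]
    exact ⟨fun h => h.resolve_right (fun h2 => absurd hs (by simpa using h2.le)), Or.inl⟩
  rw [← h3, ← h2]
  exact h1

lemma tail_integrableOn (hX : Measurable X) (hint : Integrable X μ) {t : ℝ} (ht : 0 ≤ t) :
    IntegrableOn (tail μ X) (Set.Ioi t) := by
  constructor
  · exact ((tail_antitone μ X).measurable).aestronglyMeasurable
  · rw [hasFiniteIntegral_iff_ofReal (f := tail μ X)
      (Filter.Eventually.of_forall fun s => tail_nonneg μ X s)]
    have : ∀ s : ℝ, ENNReal.ofReal (tail μ X s) = μ {ω | s < X ω} := by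
      intro s
      rw [tail, ENNReal.ofReal_toReal (measure_ne_top μ _)]
    calc ∫⁻ s in Set.Ioi t, ENNReal.ofReal (tail μ X s)
        = ∫⁻ s in Set.Ioi t, μ {ω | s < X ω} := by
          apply lintegral_congr; intro s; rw [this]
      _ ≤ ∫⁻ s in Set.Ioi (0:ℝ), μ {ω | s < X ω} :=
          lintegral_mono_set (fun s hs => show (0:ℝ) < s from lt_of_lt_of_le (by linarith [mem_Ioi.mp hs]) le_rfl)
      _ < ∞ := layercake_fin μ X hX hint

lemma tail_setIntegral_pos (hX : Measurable X) (hint : Integrable X μ)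
    (hpos : ∀ s : ℝ, 0 < μ {ω | s < X ω}) {t : ℝ} (ht : 0 ≤ t) :
    0 < ∫ s in Set.Ioi t, tail μ X s := by
  have hio : IntegrableOn (tail μ X) (Set.Ioi t) := tail_integrableOn μ X hX hint ht
  have hioc : IntegrableOn (tail μ X) (Set.Ioc t (t+1)) :=
    hio.mono_set Set.Ioc_subset_Ioi_self
  have hc : 0 < tail μ X (t+1) :=
    ENNReal.toReal_pos (hpos (t+1)).ne' (measure_ne_top μ _)
  have h1 : tail μ X (t+1) * 1 ≤ ∫ s in Set.Ioc t (t+1), tail μ X s := by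
    have := setIntegral_mono_on (integrableOn_const (by simp))
      hioc measurableSet_Ioc (fun s hs => tail_antitone μ X hs.2)
    rw [setIntegral_const] at this
    simpa [Real.volume_Ioc] using this
  have h2 : ∫ s in Set.Ioc t (t+1), tail μ X s ≤ ∫ s in Set.Ioi t, tail μ X s :=
    setIntegral_mono_set hio
      (Filter.Eventually.of_forall fun s => tail_nonneg μ X s)
      (HasSubset.Subset.eventuallyLE Set.Ioc_subset_Ioi_self)
  calc (0:ℝ) < tail μ X (t+1) * 1 := by linarith
    _ ≤ _ := le_trans h1 h2

end Pos

section Ind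
variable {Ω : Type*} [MeasurableSpace Ω] (μ : Measure Ω) [IsProbabilityMeasure μ]
  (X Z : Ω → ℝ)

lemma lint_tail_conv (hX : Measurable X) (hZ : Measurable Z) (hindep : IndepFun X Z μ)
    (c : ℝ) :
    ∫⁻ ω, μ {ω' | c - X ω < Z ω'} ∂μ = μ {ω | c < X ω + Z ω} := by
  have hmap : μ.map (fun ω => (X ω, Z ω)) = (μ.map X).prod (μ.map Z) :=
    (indepFun_iff_map_prod_eq_prod_map_map hX.aemeasurable hZ.aemeasurable).mp hindep
  have hS : MeasurableSet {p : ℝ × ℝ | c < p.1 + p.2} :=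
    measurableSet_lt measurable_const (measurable_fst.add measurable_snd)
  have h1 : μ {ω | c < X ω + Z ω}
      = (μ.map (fun ω => (X ω, Z ω))) {p : ℝ × ℝ | c < p.1 + p.2} := by
    rw [Measure.map_apply (hX.prodMk hZ) hS]
    rfl
  rw [h1, hmap, Measure.prod_apply hS]
  have h2 : ∀ x : ℝ, (μ.map Z) (Prod.mk x ⁻¹' {p : ℝ × ℝ | c < p.1 + p.2})
      = μ {ω' | c - x < Z ω'} := by
    intro x
    have : Prod.mk x ⁻¹' {p : ℝ × ℝ | c < p.1 + p.2} = {z : ℝ | c - x < z} := by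
      ext z; simp [sub_lt_iff_lt_add']
    rw [this, show {z : ℝ | c - x < z} = Set.Ioi (c-x) from rfl,
      Measure.map_apply hZ measurableSet_Ioi]
    rfl
  rw [lintegral_congr h2]
  have hmono : Monotone (fun x : ℝ => μ {ω' | c - x < Z ω'}) := fun s t hst =>
    measure_mono (fun ω' hω' => show c - t < Z ω' from lt_of_le_of_lt (by linarith) hω')
  rw [lintegral_map hmono.measurable hX]

end Ind

lemma enn_alg1 (V W G : ℝ≥0∞) (hV0 : V ≠ 0) (hVt : V ≠ ⊤) (hW0 : W ≠ 0) (hWt : W ≠ ⊤) :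
    (V / W) * ((W / V)^2 * G) = W * (G / V) := by
  rw [div_eq_mul_inv, div_eq_mul_inv, div_eq_mul_inv, pow_two]
  calc V * W⁻¹ * (W * V⁻¹ * (W * V⁻¹) * G)
      = (V * V⁻¹) * (W⁻¹ * W) * (W * (G * V⁻¹)) := by ring
    _ = W * (G * V⁻¹) := by
        rw [ENNReal.mul_inv_cancel hV0 hVt, ENNReal.inv_mul_cancel hW0 hWt, one_mul, one_mul]

lemma enn_div_le (G V c : ℝ≥0∞) (hV0 : V ≠ 0) (hVt : V ≠ ⊤) (h : G ≤ c * V * V) : G / V ≤ c * V :=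
  (ENNReal.div_le_iff hV0 hVt).mpr h

def Ffun {Ω : Type*} [MeasurableSpace Ω] (μ : Measure Ω) (X Z : Ω → ℝ) (a : ℝ)
    (n : ℕ) (ω : ℕ → ℝ) : ℝ≥0∞ :=
  if tauZero ω ≤ (n : ℕ∞) then (estR μ X Z a ω)^2 else 0

section Main
variable {Ω : Type*} [MeasurableSpace Ω] (μ : Measure Ω) [IsProbabilityMeasure μ]
  (X Z : Ω → ℝ) (a : ℝ)
set_option linter.unusedSectionVars false

lemma measurable_prepend (y : ℝ) : Measurable (prepend y) := by
  apply measurable_pi_lambda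
  intro n
  match n with
  | 0 => exact measurable_const
  | k + 1 => exact measurable_pi_apply k

lemma measurable_Ffun (n : ℕ) : Measurable (Ffun μ X Z a n) :=
  Measurable.ite (measurableSet_tauZero_le n)
    ((measurable_estR μ X Z a).pow_const 2) measurable_const

lemma Ffun_monotone (ω : ℕ → ℝ) : Monotone (fun n => Ffun μ X Z a n ω) := by
  intro m n hmn
  simp only [Ffun]
  by_cases hc : tauZero ω ≤ (m : ℕ∞)
  · rw [if_pos hc, if_pos (le_trans hc (Nat.cast_le.mpr hmn))]
  · rw [if_neg hc]
    exact zero_le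

lemma iSup_Ffun (ω : ℕ → ℝ) : ⨆ n, Ffun μ X Z a n ω = (estR μ X Z a ω)^2 := by
  cases hτ : tauZero ω with
  | top =>
    have h0 : ∀ n : ℕ, Ffun μ X Z a n ω = 0 := by
      intro n
      rw [Ffun, if_neg (by rw [hτ]; simp)]
    have he : estR μ X Z a ω = 0 := by rw [estR, if_pos hτ]
    simp [h0, he]
  | coe t =>
    apply le_antisymm
    · apply iSup_le
      intro n
      rw [Ffun]
      by_cases hc : tauZero ω ≤ (n : ℕ∞)
      · rw [if_pos hc]
      · rw [if_neg hc]; exact zero_le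
    · refine le_iSup_of_le t ?_
      rw [Ffun, if_pos (by rw [hτ])]

lemma Ffun_prepend {z : ℝ} (hz : z ≤ 0) (n : ℕ) (ω : ℕ → ℝ) (w : ℝ) (hω : ω 0 = w) :
    Ffun μ X Z a (n+1) (prepend z ω) =
      (μ {ω' | -(z+a) < X ω' + Z ω'} / μ {ω' | -(w+a) < Z ω'})^2 * Ffun μ X Z a n ω := by
  unfold Ffun
  have hτ : tauZero (prepend z ω) = tauZero ω + 1 := tauZero_prepend hz ω
  have hiff : (tauZero (prepend z ω) ≤ ((n+1 : ℕ) : ℕ∞)) ↔ tauZero ω ≤ (n : ℕ∞) := by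
    rw [hτ, show ((n+1 : ℕ) : ℕ∞) = (n : ℕ∞) + 1 by exact_mod_cast rfl]
    exact ENat.add_le_add_iff_right (by simp)
  by_cases hc : tauZero ω ≤ (n : ℕ∞)
  · rw [if_pos (hiff.mpr hc), if_pos hc, estR_prepend μ X Z a hz ω, hω, mul_pow]
  · rw [if_neg (fun h => hc (hiff.mp h)), if_neg hc, mul_zero]

end Main

lemma pt_bound (V W G c : ℝ≥0∞) (hVt : V ≠ ⊤) (hW0 : W ≠ 0) (hWt : W ≠ ⊤)
    (h : G ≤ c * V ^ 2) : (V / W) * ((W / V)^2 * G) ≤ W * (c * V) := by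
  rcases eq_or_ne V 0 with h0 | h0
  · rw [h0, ENNReal.zero_div, zero_mul]
    exact zero_le
  · rw [enn_alg1 V W G h0 hVt hW0 hWt]
    refine mul_le_mul_right ?_ W
    refine enn_div_le G V c h0 hVt ?_
    rw [pow_two] at h
    rwa [← mul_assoc] at h

lemma key_bound {Ω : Type*} [MeasurableSpace Ω] (μ : Measure Ω) [IsProbabilityMeasure μ]
    (X Z : Ω → ℝ) (hX : Measurable X) (hZ : Measurable Z) (hindep : IndepFun X Z μ)
    (hpos : ∀ t : ℝ, 0 < μ {ω | t < X ω}) (hZnn : ∀ ω, 0 ≤ Z ω)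
    (γ : ℝ) (hγ0 : 0 < γ) (hγ1 : γ < 1) (a : ℝ) (ha : a ≤ 0)
    (hκ0 : μ {ω | -a < Z ω} ≠ 0)
    (hkey : ∀ z : ℝ, z ≤ 0 →
      (μ {ω | -(z+a) < X ω + Z ω})^2 ≤ (μ {ω | -(z+a) < Z ω})^2 +
        ENNReal.ofReal γ * μ {ω | -(z+a) < X ω} * μ {ω | -(z+a) < X ω + Z ω})
    (ν : ℝ → Measure (ℕ → ℝ)) (hνmeas : Measurable ν)
    (hνchain : ∀ y : ℝ, y ≤ 0 → ν y = (QKer μ X Z a y).bind fun z => (ν z).map (prepend y))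
    (hνabs : ∀ y : ℝ, 0 < y → ν y = Measure.dirac fun _ => y) :
    ∀ (n : ℕ) (z : ℝ),
      (∫⁻ ω, Ffun μ X Z a n ω ∂ν z) ≤
        ((ENNReal.ofReal (1 - γ))⁻¹ * ((μ {ω | -a < Z ω}) ^ 2)⁻¹) *
          (μ {ω | -(z + a) < Z ω})^2 := by
  -- abbreviations and basic facts
  have h1γ0 : ENNReal.ofReal (1-γ) ≠ 0 := by
    simp only [ne_eq, ENNReal.ofReal_eq_zero, not_le]; linarith
  have hκ2ne0 : (μ {ω | -a < Z ω})^2 ≠ 0 := pow_ne_zero 2 hκ0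
  have hκ2net : (μ {ω | -a < Z ω})^2 ≠ ⊤ := ENNReal.pow_ne_top (measure_ne_top μ _)
  have hCt : ((ENNReal.ofReal (1 - γ))⁻¹ * ((μ {ω | -a < Z ω}) ^ 2)⁻¹) ≠ ⊤ :=
    ENNReal.mul_ne_top (ENNReal.inv_ne_top.mpr h1γ0) (ENNReal.inv_ne_top.mpr hκ2ne0)
  have hCsplit : ((μ {ω | -a < Z ω})^2)⁻¹ +
      ((ENNReal.ofReal (1 - γ))⁻¹ * ((μ {ω | -a < Z ω}) ^ 2)⁻¹) * ENNReal.ofReal γ =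
      (ENNReal.ofReal (1 - γ))⁻¹ * ((μ {ω | -a < Z ω}) ^ 2)⁻¹ := by
    have c1 : ((ENNReal.ofReal (1 - γ))⁻¹ * ((μ {ω | -a < Z ω}) ^ 2)⁻¹) * ENNReal.ofReal (1-γ)
        = ((μ {ω | -a < Z ω})^2)⁻¹ := by
      calc ((ENNReal.ofReal (1 - γ))⁻¹ * ((μ {ω | -a < Z ω}) ^ 2)⁻¹) * ENNReal.ofReal (1-γ)
          = ((μ {ω | -a < Z ω}) ^ 2)⁻¹ * ((ENNReal.ofReal (1 - γ))⁻¹ * ENNReal.ofReal (1-γ)) := by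
            ring
        _ = _ := by rw [ENNReal.inv_mul_cancel h1γ0 ENNReal.ofReal_ne_top, mul_one]
    have c2 : ENNReal.ofReal (1-γ) + ENNReal.ofReal γ = 1 := by
      rw [← ENNReal.ofReal_add (by linarith) hγ0.le]
      norm_num
    calc ((μ {ω | -a < Z ω})^2)⁻¹ +
        ((ENNReal.ofReal (1 - γ))⁻¹ * ((μ {ω | -a < Z ω}) ^ 2)⁻¹) * ENNReal.ofReal γ
        = ((ENNReal.ofReal (1 - γ))⁻¹ * ((μ {ω | -a < Z ω}) ^ 2)⁻¹) *
            (ENNReal.ofReal (1-γ) + ENNReal.ofReal γ) := by rw [mul_add, c1]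
      _ = _ := by rw [c2, mul_one]
  have hvmono : Monotone (fun w : ℝ => μ {ω | -(w + a) < Z ω}) := by
    intro s t hst
    exact measure_mono (fun ω hω => show -(t + a) < Z ω from
      lt_of_le_of_lt (by linarith) (show -(s + a) < Z ω from hω))
  have hvmeas : Measurable (fun w : ℝ => μ {ω | -(w + a) < Z ω}) := hvmono.measurable
  have hFmeas : ∀ n, Measurable (Ffun μ X Z a n) := measurable_Ffun μ X Z a
  have hgmeas : ∀ n, Measurable (fun w : ℝ => ∫⁻ ω, Ffun μ X Z a n ω ∂ν w) :=
    fun n => (Measure.measurable_lintegral (hFmeas n)).comp hνmeas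
  have hω0 : ∀ w : ℝ, ∀ᵐ ω ∂ν w, ω 0 = w := by
    intro w
    have hms : MeasurableSet {ω : ℕ → ℝ | ω 0 = w} := by
      have h : {ω : ℕ → ℝ | ω 0 = w} = (fun ω : ℕ → ℝ => ω 0) ⁻¹' {w} := rfl
      rw [h]
      exact (measurable_pi_apply 0) (measurableSet_singleton w)
    rw [Filter.eventually_iff, mem_ae_iff]
    show ν w {ω : ℕ → ℝ | ω 0 = w}ᶜ = 0
    have hker : Measurable fun z : ℝ => (ν z).map (prepend w) :=
      (Measure.measurable_map _ (measurable_prepend w)).comp hνmeas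
    rcases le_or_gt w 0 with hw | hw
    · rw [hνchain w hw, Measure.bind_apply hms.compl hker.aemeasurable]
      have hzero : ∀ w' : ℝ, ((ν w').map (prepend w)) {ω : ℕ → ℝ | ω 0 = w}ᶜ = 0 := by
        intro w'
        rw [Measure.map_apply (measurable_prepend w) hms.compl]
        have h : prepend w ⁻¹' {ω : ℕ → ℝ | ω 0 = w}ᶜ = ∅ := by
          ext ω
          simp [prepend]
        rw [h]
        exact measure_empty
      rw [lintegral_congr hzero]
      simp
    · rw [hνabs w hw, Measure.dirac_apply' _ hms.compl]
      simp [Set.indicator]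
  have hone : ∀ (n : ℕ) (w : ℝ), 0 < w → ∫⁻ ω, Ffun μ X Z a n ω ∂ν w = 1 := by
    intro n w hw
    rw [hνabs w hw, lintegral_dirac' _ (hFmeas n), Ffun,
      if_pos (by rw [tauZero_const_pos hw]; exact zero_le), estR_const_pos μ X Z a hw,
      one_pow]
  have h1C : ∀ w : ℝ, 0 < w →
      (1:ℝ≥0∞) ≤ ((ENNReal.ofReal (1 - γ))⁻¹ * ((μ {ω | -a < Z ω}) ^ 2)⁻¹) *
        (μ {ω | -(w + a) < Z ω})^2 := by
    intro w hw
    have hκv : μ {ω | -a < Z ω} ≤ μ {ω | -(w + a) < Z ω} :=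
      measure_mono (fun ω hω => show -(w + a) < Z ω from
        lt_of_le_of_lt (by linarith) (show -a < Z ω from hω))
    have h2 : (μ {ω | -a < Z ω})^2 ≤ (μ {ω | -(w + a) < Z ω})^2 :=
      pow_le_pow_left' hκv 2
    calc (1:ℝ≥0∞) ≤ (ENNReal.ofReal (1-γ))⁻¹ := by
          rw [ENNReal.one_le_inv]
          calc ENNReal.ofReal (1-γ) ≤ ENNReal.ofReal 1 := ENNReal.ofReal_le_ofReal (by linarith)
            _ = 1 := ENNReal.ofReal_one
      _ = (ENNReal.ofReal (1-γ))⁻¹ * (((μ {ω | -a < Z ω})^2)⁻¹ * (μ {ω | -a < Z ω})^2) := by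
          rw [ENNReal.inv_mul_cancel hκ2ne0 hκ2net, mul_one]
      _ = ((ENNReal.ofReal (1 - γ))⁻¹ * ((μ {ω | -a < Z ω}) ^ 2)⁻¹) * (μ {ω | -a < Z ω})^2 := by
          rw [mul_assoc]
      _ ≤ _ := mul_le_mul_right h2 _
  intro n
  induction n with
  | zero =>
    intro z
    rcases lt_or_ge 0 z with hz | hz
    · rw [hone 0 z hz]
      exact h1C z hz
    · have hz0 : ∀ᵐ ω ∂ν z, Ffun μ X Z a 0 ω = 0 := by
        filter_upwards [hω0 z] with ω hω
        rw [Ffun, if_neg]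
        rw [show ((0:ℕ) : ℕ∞) = ((0:ℕ∞)) by rfl, nonpos_iff_eq_zero,
          show ((0:ℕ∞)) = ((0:ℕ) : ℕ∞) by rfl, tauZero_eq_coe_iff]
        push_neg
        intro hc
        exact absurd (hω ▸ hc) (not_lt.mpr hz)
      rw [lintegral_congr_ae hz0, lintegral_zero]
      exact zero_le
  | succ n ih =>
    intro z
    rcases lt_or_ge 0 z with hz | hz
    · rw [hone (n+1) z hz]
      exact h1C z hz
    · -- main inductive step, z ≤ 0
      have hsub : {ω | -(z + a) < X ω} ⊆ {ω | -(z + a) < X ω + Z ω} :=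
        fun ω hω => show -(z + a) < X ω + Z ω from
          lt_of_lt_of_le (show -(z + a) < X ω from hω) (by linarith [hZnn ω])
      have hW0 : μ {ω | -(z + a) < X ω + Z ω} ≠ 0 :=
        (lt_of_lt_of_le (hpos (-(z+a))) (measure_mono hsub)).ne'
      have hWt : μ {ω | -(z + a) < X ω + Z ω} ≠ ⊤ := measure_ne_top μ _
      have hker : Measurable fun w : ℝ => (ν w).map (prepend z) :=
        (Measure.measurable_map _ (measurable_prepend z)).comp hνmeas
      have hfun1 : Measurable (fun w : ℝ =>
          (μ {ω | -(z + a) < X ω + Z ω} / μ {ω | -(w + a) < Z ω})^2 *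
            ∫⁻ ω, Ffun μ X Z a n ω ∂ν w) :=
        ((measurable_const.div hvmeas).pow_const 2).mul (hgmeas n)
      have stepA : ∫⁻ ω, Ffun μ X Z a (n+1) ω ∂ν z
          = ∫⁻ w, (μ {ω | -(z + a) < X ω + Z ω} / μ {ω | -(w + a) < Z ω})^2 *
              (∫⁻ ω, Ffun μ X Z a n ω ∂ν w) ∂(QKer μ X Z a z) := by
        rw [hνchain z hz, Measure.lintegral_bind hker.aemeasurable (hFmeas (n+1)).aemeasurable]
        apply lintegral_congr
        intro w
        rw [lintegral_map (hFmeas (n+1)) (measurable_prepend z),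
          ← lintegral_const_mul _ (hFmeas n)]
        apply lintegral_congr_ae
        filter_upwards [hω0 w] with ω hω
        exact Ffun_prepend μ X Z a hz n ω w hω
      have hfun2 : Measurable (fun w : ℝ =>
          (μ {ω | -(w + a) < Z ω} / μ {ω | -(z + a) < X ω + Z ω}) *
            ((μ {ω | -(z + a) < X ω + Z ω} / μ {ω | -(w + a) < Z ω})^2 *
              ∫⁻ ω, Ffun μ X Z a n ω ∂ν w)) :=
        (hvmeas.div measurable_const).mul hfun1
      have stepB : ∫⁻ w, (μ {ω | -(z + a) < X ω + Z ω} / μ {ω | -(w + a) < Z ω})^2 *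
              (∫⁻ ω, Ffun μ X Z a n ω ∂ν w) ∂(QKer μ X Z a z)
          = ∫⁻ ω', (μ {ω | -((z + X ω') + a) < Z ω} / μ {ω | -(z + a) < X ω + Z ω}) *
              ((μ {ω | -(z + a) < X ω + Z ω} / μ {ω | -((z + X ω') + a) < Z ω})^2 *
                ∫⁻ ω, Ffun μ X Z a n ω ∂ν (z + X ω')) ∂μ := by
        rw [QKer, lintegral_withDensity_eq_lintegral_mul _
          (show Measurable (fun w : ℝ => μ {ω | -(w + a) < Z ω} / μ {ω | -(z + a) < X ω + Z ω})
            from hvmeas.div measurable_const) hfun1]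
        simp only [Pi.mul_apply]
        rw [lintegral_map hfun2 (show Measurable (fun ω => z + X ω) from measurable_const.add hX)]
      have hκ2V : ∀ w : ℝ, 0 < w → (1:ℝ≥0∞) ≤ ((μ {ω | -a < Z ω})^2)⁻¹ *
          (μ {ω | -(w + a) < Z ω})^2 := by
        intro w hw
        have hκv : μ {ω | -a < Z ω} ≤ μ {ω | -(w + a) < Z ω} :=
          measure_mono (fun ω hω => show -(w + a) < Z ω from
            lt_of_le_of_lt (by linarith) (show -a < Z ω from hω))
        calc (1:ℝ≥0∞) = ((μ {ω | -a < Z ω})^2)⁻¹ * (μ {ω | -a < Z ω})^2 :=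
              (ENNReal.inv_mul_cancel hκ2ne0 hκ2net).symm
          _ ≤ _ := mul_le_mul_right (pow_le_pow_left' hκv 2) _
      have hptle : ∀ x : ℝ,
          (μ {ω | -((z + x) + a) < Z ω} / μ {ω | -(z + a) < X ω + Z ω}) *
            ((μ {ω | -(z + a) < X ω + Z ω} / μ {ω | -((z + x) + a) < Z ω})^2 *
              ∫⁻ ω, Ffun μ X Z a n ω ∂ν (z + x))
          ≤ μ {ω | -(z + a) < X ω + Z ω} *
            (if z + x ≤ 0 then
              ((ENNReal.ofReal (1 - γ))⁻¹ * ((μ {ω | -a < Z ω}) ^ 2)⁻¹) *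
                μ {ω | -((z + x) + a) < Z ω}
            else ((μ {ω | -a < Z ω})^2)⁻¹ * μ {ω | -((z + x) + a) < Z ω}) := by
        intro x
        by_cases hc : z + x ≤ 0
        · rw [if_pos hc]
          exact pt_bound _ _ _ _ (measure_ne_top μ _) hW0 hWt (ih (z + x))
        · rw [if_neg hc]
          refine pt_bound _ _ _ _ (measure_ne_top μ _) hW0 hWt ?_
          rw [hone n (z + x) (not_le.mp hc)]
          exact hκ2V (z + x) (not_le.mp hc)
      have hmeasite0 : Measurable (fun ω' : Ω =>
          if z + X ω' ≤ 0 then μ {ω | -((z + X ω') + a) < Z ω} else 0) :=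
        Measurable.ite (measurableSet_le (measurable_const.add hX) measurable_const)
          (hvmeas.comp (measurable_const.add hX)) measurable_const
      have hmeasite1 : Measurable (fun ω' : Ω =>
          if z + X ω' ≤ 0 then 0 else μ {ω | -((z + X ω') + a) < Z ω}) :=
        Measurable.ite (measurableSet_le (measurable_const.add hX) measurable_const)
          measurable_const (hvmeas.comp (measurable_const.add hX))
      -- the two half-integrals
      have stepD : ∫⁻ ω', μ {ω | -(z + a) < X ω + Z ω} *
            (if z + X ω' ≤ 0 then
              ((ENNReal.ofReal (1 - γ))⁻¹ * ((μ {ω | -a < Z ω}) ^ 2)⁻¹) *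
                μ {ω | -((z + X ω') + a) < Z ω}
            else ((μ {ω | -a < Z ω})^2)⁻¹ * μ {ω | -((z + X ω') + a) < Z ω}) ∂μ
          = (μ {ω | -(z + a) < X ω + Z ω} *
              ((ENNReal.ofReal (1 - γ))⁻¹ * ((μ {ω | -a < Z ω}) ^ 2)⁻¹)) *
              (∫⁻ ω', (if z + X ω' ≤ 0 then μ {ω | -((z + X ω') + a) < Z ω} else 0) ∂μ)
            + (μ {ω | -(z + a) < X ω + Z ω} * ((μ {ω | -a < Z ω})^2)⁻¹) *
              (∫⁻ ω', (if z + X ω' ≤ 0 then 0 else μ {ω | -((z + X ω') + a) < Z ω}) ∂μ) := by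
        rw [← lintegral_const_mul _ hmeasite0, ← lintegral_const_mul _ hmeasite1,
          ← lintegral_add_left]
        · apply lintegral_congr
          intro ω'
          by_cases hc : z + X ω' ≤ 0 <;> simp [hc, mul_assoc]
        · exact hmeasite0.const_mul _
      have stepE : (∫⁻ ω', (if z + X ω' ≤ 0 then μ {ω | -((z + X ω') + a) < Z ω} else 0) ∂μ)
            + (∫⁻ ω', (if z + X ω' ≤ 0 then 0 else μ {ω | -((z + X ω') + a) < Z ω}) ∂μ)
          = μ {ω | -(z + a) < X ω + Z ω} := by
        rw [← lintegral_add_left hmeasite0]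
        have hpw : ∀ ω' : Ω, ((if z + X ω' ≤ 0 then μ {ω | -((z + X ω') + a) < Z ω} else 0)
            + (if z + X ω' ≤ 0 then 0 else μ {ω | -((z + X ω') + a) < Z ω}))
            = μ {ω | (-(z + a) - X ω') < Z ω} := by
          intro ω'
          have he : -((z + X ω') + a) = -(z + a) - X ω' := by ring
          by_cases hc : z + X ω' ≤ 0 <;> simp [hc, he]
        rw [lintegral_congr hpw]
        exact lint_tail_conv μ X Z hX hZ hindep (-(z+a))
      have stepF : μ {ω | -(z + a) < X ω}
          ≤ ∫⁻ ω', (if z + X ω' ≤ 0 then 0 else μ {ω | -((z + X ω') + a) < Z ω}) ∂μ := by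
        have hms2 : MeasurableSet {ω : Ω | -(z + a) < X ω} := hX measurableSet_Ioi
        rw [← lintegral_indicator_one hms2]
        apply lintegral_mono
        intro ω'
        by_cases hc : -(z + a) < X ω'
        · rw [Set.indicator_of_mem (show ω' ∈ {ω : Ω | -(z + a) < X ω} from hc),
            Pi.one_apply]
          have hcc : ¬ (z + X ω' ≤ 0) := by push_neg; linarith
          show (1:ℝ≥0∞) ≤ if z + X ω' ≤ 0 then 0 else μ {ω | -(z + X ω' + a) < Z ω}
          rw [if_neg hcc]
          have huniv : {ω | -(z + X ω' + a) < Z ω} = univ :=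
            eq_univ_of_forall fun ω => lt_of_lt_of_le (by linarith) (hZnn ω)
          rw [huniv, measure_univ]
        · rw [Set.indicator_of_notMem (show ω' ∉ {ω : Ω | -(z + a) < X ω} from hc)]
          exact zero_le
      -- conclude
      rw [stepA, stepB]
      refine le_trans (lintegral_mono fun ω' => hptle (X ω')) ?_
      rw [stepD]
      -- final arithmetic
      have hTt : ((ENNReal.ofReal (1 - γ))⁻¹ * ((μ {ω | -a < Z ω}) ^ 2)⁻¹) *
          ENNReal.ofReal γ * μ {ω | -(z + a) < X ω} * μ {ω | -(z + a) < X ω + Z ω} ≠ ⊤ :=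
        ENNReal.mul_ne_top (ENNReal.mul_ne_top (ENNReal.mul_ne_top hCt
          ENNReal.ofReal_ne_top) (measure_ne_top μ _)) (measure_ne_top μ _)
      rw [← ENNReal.add_le_add_iff_right hTt]
      calc (μ {ω | -(z + a) < X ω + Z ω} *
              ((ENNReal.ofReal (1 - γ))⁻¹ * ((μ {ω | -a < Z ω}) ^ 2)⁻¹)) *
              (∫⁻ ω', (if z + X ω' ≤ 0 then μ {ω | -((z + X ω') + a) < Z ω} else 0) ∂μ)
            + (μ {ω | -(z + a) < X ω + Z ω} * ((μ {ω | -a < Z ω})^2)⁻¹) *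
              (∫⁻ ω', (if z + X ω' ≤ 0 then 0 else μ {ω | -((z + X ω') + a) < Z ω}) ∂μ)
            + ((ENNReal.ofReal (1 - γ))⁻¹ * ((μ {ω | -a < Z ω}) ^ 2)⁻¹) *
              ENNReal.ofReal γ * μ {ω | -(z + a) < X ω} * μ {ω | -(z + a) < X ω + Z ω}
          ≤ (μ {ω | -(z + a) < X ω + Z ω} *
              ((ENNReal.ofReal (1 - γ))⁻¹ * ((μ {ω | -a < Z ω}) ^ 2)⁻¹)) *
              (∫⁻ ω', (if z + X ω' ≤ 0 then μ {ω | -((z + X ω') + a) < Z ω} else 0) ∂μ)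
            + (μ {ω | -(z + a) < X ω + Z ω} * ((μ {ω | -a < Z ω})^2)⁻¹) *
              (∫⁻ ω', (if z + X ω' ≤ 0 then 0 else μ {ω | -((z + X ω') + a) < Z ω}) ∂μ)
            + ((ENNReal.ofReal (1 - γ))⁻¹ * ((μ {ω | -a < Z ω}) ^ 2)⁻¹) *
              ENNReal.ofReal γ *
              (∫⁻ ω', (if z + X ω' ≤ 0 then 0 else μ {ω | -((z + X ω') + a) < Z ω}) ∂μ) *
              μ {ω | -(z + a) < X ω + Z ω} := by
            gcongr
        _ = μ {ω | -(z + a) < X ω + Z ω} *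
              ((((ENNReal.ofReal (1 - γ))⁻¹ * ((μ {ω | -a < Z ω}) ^ 2)⁻¹)) *
                (∫⁻ ω', (if z + X ω' ≤ 0 then μ {ω | -((z + X ω') + a) < Z ω} else 0) ∂μ)
              + (((μ {ω | -a < Z ω})^2)⁻¹ +
                  ((ENNReal.ofReal (1 - γ))⁻¹ * ((μ {ω | -a < Z ω}) ^ 2)⁻¹) *
                    ENNReal.ofReal γ) *
                (∫⁻ ω', (if z + X ω' ≤ 0 then 0 else μ {ω | -((z + X ω') + a) < Z ω}) ∂μ)) := by
            ring
        _ = ((ENNReal.ofReal (1 - γ))⁻¹ * ((μ {ω | -a < Z ω}) ^ 2)⁻¹) *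
              (μ {ω | -(z + a) < X ω + Z ω} *
                ((∫⁻ ω', (if z + X ω' ≤ 0 then μ {ω | -((z + X ω') + a) < Z ω} else 0) ∂μ)
                + (∫⁻ ω', (if z + X ω' ≤ 0 then 0 else μ {ω | -((z + X ω') + a) < Z ω}) ∂μ))) := by
            rw [hCsplit]
            ring
        _ = ((ENNReal.ofReal (1 - γ))⁻¹ * ((μ {ω | -a < Z ω}) ^ 2)⁻¹) *
              (μ {ω | -(z + a) < X ω + Z ω})^2 := by
            rw [stepE, ← pow_two]
        _ ≤ ((ENNReal.ofReal (1 - γ))⁻¹ * ((μ {ω | -a < Z ω}) ^ 2)⁻¹) *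
              ((μ {ω | -(z + a) < Z ω})^2 + ENNReal.ofReal γ * μ {ω | -(z + a) < X ω} *
                μ {ω | -(z + a) < X ω + Z ω}) :=
            mul_le_mul_right (hkey z hz) _
        _ = ((ENNReal.ofReal (1 - γ))⁻¹ * ((μ {ω | -a < Z ω}) ^ 2)⁻¹) *
              (μ {ω | -(z + a) < Z ω})^2
            + ((ENNReal.ofReal (1 - γ))⁻¹ * ((μ {ω | -a < Z ω}) ^ 2)⁻¹) *
              ENNReal.ofReal γ * μ {ω | -(z + a) < X ω} * μ {ω | -(z + a) < X ω + Z ω} := by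
            ring


/-- under Assumption A, if `a* ≤ 0` is such that
`−γ ≤ (v(y)² − w(y)²)/(P(X > −y) w(y))` for all `y ≤ a*`, then for every starting point
`y ≤ 0`, `E_y^{Q_{a*}}[R²] ≤ (1 − γ)⁻¹ κ(a*)⁻² v(y + a*)²` with `κ(a*) = P(Z > −a*)`. -/
theorem statement14 {Ω : Type*} [MeasurableSpace Ω] (μ : Measure Ω)
    [IsProbabilityMeasure μ]
    (X Z : Ω → ℝ) (hX : Measurable X) (hZ : Measurable Z)
    (hindep : IndepFun X Z μ)
    (hint : Integrable X μ) (hneg : ∫ ω, X ω ∂μ < 0)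
    (hpos : ∀ t : ℝ, 0 < μ {ω | t < X ω})
    -- Assumption A: `X⁺ ∈ S*`
    (hSstar : Tendsto (fun t => (∫ s in (0:ℝ)..t, tail μ X (t - s) * tail μ X s) /
      (2 * (∫ ω, max (X ω) 0 ∂μ) * tail μ X t)) atTop (nhds 1))
    -- `Z ≥ 0` has the integrated-tail distribution of `X`
    (hZnn : ∀ ω, 0 ≤ Z ω)
    (hZtail : ∀ t : ℝ, 0 ≤ t →
      tail μ Z t = min (|∫ ω, X ω ∂μ|⁻¹ * ∫ s in Set.Ioi t, tail μ X s) 1)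
    -- `γ ∈ (0, 1)` and `a* ≤ 0` satisfying the key inequality (11)
    (γ : ℝ) (hγ0 : 0 < γ) (hγ1 : γ < 1) (a : ℝ) (ha : a ≤ 0)
    (hineq : ∀ y : ℝ, y ≤ a →
      -γ ≤ ((tail μ Z (-y)) ^ 2 - (tail μ (fun ω => X ω + Z ω) (-y)) ^ 2) /
        (tail μ X (-y) * tail μ (fun ω => X ω + Z ω) (-y)))
    -- `ν y` is the law of the chain with transition kernel `Q_{a*}` started at `y`,
    -- absorbed upon exceeding level `0`
    (ν : ℝ → Measure (ℕ → ℝ)) (hνmeas : Measurable ν)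
    (hνprob : ∀ y, IsProbabilityMeasure (ν y))
    (hνchain : ∀ y : ℝ, y ≤ 0 →
      ν y = (QKer μ X Z a y).bind fun z => (ν z).map (prepend y))
    (hνabs : ∀ y : ℝ, 0 < y → ν y = Measure.dirac fun _ => y) :
    ∀ y : ℝ, y ≤ 0 →
      (∫⁻ ω', (estR μ X Z a ω') ^ 2 ∂(ν y)) ≤
        (ENNReal.ofReal (1 - γ))⁻¹ * ((μ {ω | -a < Z ω}) ^ 2)⁻¹ *
          (μ {ω | -(y + a) < Z ω}) ^ 2 := by
  intro y hy
  -- positivity of κ(a*)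
  have hc0 : 0 < |∫ ω, X ω ∂μ| := abs_pos.mpr (ne_of_lt hneg)
  have hI : 0 < ∫ s in Set.Ioi (-a), tail μ X s :=
    tail_setIntegral_pos μ X hX hint hpos (by linarith)
  have hκ0 : μ {ω | -a < Z ω} ≠ 0 := by
    have ht : 0 < tail μ Z (-a) := by
      rw [hZtail (-a) (by linarith)]
      exact lt_min (mul_pos (inv_pos.mpr hc0) hI) one_pos
    intro h0
    rw [tail, h0] at ht
    simp at ht
  -- the key inequality, in `ℝ≥0∞` form
  have hkey : ∀ z : ℝ, z ≤ 0 →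
      (μ {ω | -(z+a) < X ω + Z ω})^2 ≤ (μ {ω | -(z+a) < Z ω})^2 +
        ENNReal.ofReal γ * μ {ω | -(z+a) < X ω} * μ {ω | -(z+a) < X ω + Z ω} := by
    intro z hz
    have h := hineq (z + a) (by linarith)
    have hsub : {ω | -(z+a) < X ω} ⊆ {ω | -(z+a) < X ω + Z ω} :=
      fun ω hω => show -(z + a) < X ω + Z ω from
        lt_of_lt_of_le (show -(z + a) < X ω from hω) (by linarith [hZnn ω])
    have hpR : 0 < tail μ X (-(z+a)) :=
      ENNReal.toReal_pos (hpos (-(z+a))).ne' (measure_ne_top μ _)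
    have hwp : tail μ X (-(z+a)) ≤ tail μ (fun ω => X ω + Z ω) (-(z+a)) :=
      (ENNReal.toReal_le_toReal (measure_ne_top μ _) (measure_ne_top μ _)).mpr
        (measure_mono hsub)
    have hwR : 0 < tail μ (fun ω => X ω + Z ω) (-(z+a)) := lt_of_lt_of_le hpR hwp
    rw [le_div_iff₀ (mul_pos hpR hwR)] at h
    have hreal : (tail μ (fun ω => X ω + Z ω) (-(z+a)))^2 ≤ (tail μ Z (-(z+a)))^2 +
        γ * (tail μ X (-(z+a)) * tail μ (fun ω => X ω + Z ω) (-(z+a))) := by nlinarith [h]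
    refine (ENNReal.toReal_le_toReal (ENNReal.pow_ne_top (measure_ne_top μ _)) ?_).mp ?_
    · exact ENNReal.add_ne_top.mpr ⟨ENNReal.pow_ne_top (measure_ne_top μ _),
        ENNReal.mul_ne_top (ENNReal.mul_ne_top ENNReal.ofReal_ne_top (measure_ne_top μ _))
          (measure_ne_top μ _)⟩
    · rw [ENNReal.toReal_pow, ENNReal.toReal_add (ENNReal.pow_ne_top (measure_ne_top μ _))
        (ENNReal.mul_ne_top (ENNReal.mul_ne_top ENNReal.ofReal_ne_top (measure_ne_top μ _))
          (measure_ne_top μ _)), ENNReal.toReal_pow, ENNReal.toReal_mul, ENNReal.toReal_mul,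
        ENNReal.toReal_ofReal hγ0.le]
      simp only [tail] at hreal
      nlinarith [hreal]
  -- monotone convergence
  have hmct : (∫⁻ ω', (estR μ X Z a ω') ^ 2 ∂ν y)
      = ⨆ n, ∫⁻ ω, Ffun μ X Z a n ω ∂ν y := by
    calc (∫⁻ ω', (estR μ X Z a ω') ^ 2 ∂ν y)
        = ∫⁻ ω', ⨆ n, Ffun μ X Z a n ω' ∂ν y :=
          lintegral_congr fun ω => (iSup_Ffun μ X Z a ω).symm
      _ = ⨆ n, ∫⁻ ω, Ffun μ X Z a n ω ∂ν y :=
          lintegral_iSup (fun n => measurable_Ffun μ X Z a n)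
            (fun m n hmn ω => Ffun_monotone μ X Z a ω hmn)
  rw [hmct]
  exact iSup_le fun n =>
    key_bound μ X Z hX hZ hindep hpos hZnn γ hγ0 hγ1 a ha hκ0 hkey ν hνmeas hνchain hνabs n y
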